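/- Let G = (V, E) be an undirected graph with |V| = n divisible by 3. Define local scores on N = V by: f_v({w}) = 1 if w ∈ N_G(v); f_v({u,w}) = n if {u,w} ⊆ N_G(v); and f_v(P) = 0 otherwise. Then G admits a partition of V into n/3 vertex-disjoint triangles if and only if there exists an arc set A ⊆ N × N such that (N, A) is a DAG, every connected component of the moralized graph of (N, A) has at most 3 vertices, and Σ_{v∈N} f_v(P_v^A) ≥ (n² + n)/3. -/

import Mathlib

/-!
Sum the score over the connected components of the moralized graph. In a component of at most
three vertices, a vertex `v` whose two parents `u, w` are neighbours of `v` scores `n`, and the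
component is then `{v, u, w}`; the only possible parent of `u` is `w` and vice versa, and not
both arcs can be present, so `u` and `w` add at most `1`, and only if they are adjacent.
Without such a vertex each vertex scores at most `1`. Hence `3 · score(C) ≤ (n + 1) |C|` for
every component `C` once `n ≥ 3`, with equality only if `C` is a triangle of `G`; the bound
`(n² + n) / 3` forces equality everywhere. Conversely, orienting each triangle of a cover along
a linear order gives scores `n, 1, 0` on it.
-/

open scoped Classical

variable {V : Type*}

/-- The arc relation of an arc set. -/
def arcRel (A : Set (V × V)) : V → V → Prop := fun u v => (u, v) ∈ A

/-- `(N, A)` is a directed acyclic graph: no directed cycles. -/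
def IsDAG (A : Set (V × V)) : Prop := ∀ v : V, ¬ Relation.TransGen (arcRel A) v v

/-- Parent set of `v` under arc set `A`. -/
def parents (A : Set (V × V)) (v : V) : Set V := {u | (u, v) ∈ A}

/-- `w` is a descendant of `v`: there is a (nonempty) directed path from `v` to `w`. -/
def Descends (A : Set (V × V)) (v w : V) : Prop := Relation.TransGen (arcRel A) v w

/-- The moralized graph of `(N, A)`: edges between adjacent vertices and
between vertices with a common child. -/
def Mo (A : Set (V × V)) : SimpleGraph V where
  Adj u v := u ≠ v ∧ ((u, v) ∈ A ∨ (v, u) ∈ A ∨ ∃ w, (u, w) ∈ A ∧ (v, w) ∈ A)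
  symm := by
    constructor
    intro u v h
    obtain ⟨hne, h⟩ := h
    refine ⟨hne.symm, ?_⟩
    rcases h with h | h | ⟨w, h1, h2⟩
    · exact Or.inr (Or.inl h)
    · exact Or.inl h
    · exact Or.inr (Or.inr ⟨w, h2, h1⟩)
  loopless := ⟨fun v h => h.1 rfl⟩

/-- `S` is a dissociation set of `G`: `G − S` has maximum degree at most one. -/
def IsDissoc (G : SimpleGraph V) (S : Set V) : Prop :=
  ∀ v ∉ S, {w | w ∉ S ∧ G.Adj v w}.ncard ≤ 1

open SimpleGraph

section DAG

variable {A : Set (V × V)} {u v : V}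

lemma IsDAG.ne_of_mem (hA : IsDAG A) (h : (u, v) ∈ A) : u ≠ v := by
  rintro rfl
  exact hA u (.single h)

lemma IsDAG.swap_notMem (hA : IsDAG A) (h : (u, v) ∈ A) : (v, u) ∉ A :=
  fun h' => hA u (.head h (.single h'))

lemma isDAG_of_forall_lt [Preorder V] (h : ∀ p ∈ A, p.2 < p.1) : IsDAG A := by
  have descends_lt : ∀ {u v}, Relation.TransGen (arcRel A) u v → v < u := by
    intro u v huv
    induction huv with
    | single huv => exact h _ huv
    | tail _ hvw ih => exact (h _ hvw).trans ih
  exact fun v hv => lt_irrefl v (descends_lt hv)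

lemma Mo.reachable_of_mem (h : (u, v) ∈ A) : (Mo A).Reachable u v := by
  by_cases huv : u = v
  · exact huv ▸ Reachable.refl u
  · exact Adj.reachable ⟨huv, Or.inl h⟩

lemma Mo.mem_supp_of_mem {c : (Mo A).ConnectedComponent} (h : (u, v) ∈ A) (hv : v ∈ c.supp) :
    u ∈ c.supp :=
  (ConnectedComponent.eq.2 (Mo.reachable_of_mem h)).trans hv

lemma Mo.supp_connectedComponentMk (A : Set (V × V)) (v : V) :
    ((Mo A).connectedComponentMk v).supp = {w | (Mo A).Reachable v w} := by
  ext w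
  exact ConnectedComponent.eq.trans reachable_comm

end DAG

section Score

noncomputable def score (G : SimpleGraph V) (n : ℕ) (A : Set (V × V)) (v : V) : ℕ :=
  if ∃ u w, u ≠ w ∧ G.Adj v u ∧ G.Adj v w ∧ parents A v = {u, w} then n
  else if ∃ w, G.Adj v w ∧ parents A v = {w} then 1 else 0

variable {G : SimpleGraph V} {n : ℕ} {A : Set (V × V)} {u v w : V}

lemma score_le_one (h : ¬ ∃ u w, u ≠ w ∧ G.Adj v u ∧ G.Adj v w ∧ parents A v = {u, w}) :
    score G n A v ≤ 1 := by
  unfold score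
  rw [if_neg h]
  split <;> omega

lemma score_of_parents_eq_pair (huw : u ≠ w) (hu : G.Adj v u) (hw : G.Adj v w)
    (hp : parents A v = {u, w}) : score G n A v = n :=
  if_pos ⟨u, w, huw, hu, hw, hp⟩

lemma score_of_parents_subset (h : parents A u ⊆ {w}) :
    score G n A u = if G.Adj u w ∧ w ∈ parents A u then 1 else 0 := by
  have not_pair : ¬ ∃ a b, a ≠ b ∧ G.Adj u a ∧ G.Adj u b ∧ parents A u = {a, b} := by
    rintro ⟨a, b, hab, -, -, hp⟩
    have ha : a = w := h (hp ▸ Set.mem_insert a {b})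
    have hb : b = w := h (hp ▸ Set.mem_insert_of_mem a rfl)
    exact hab (ha.trans hb.symm)
  have singleton_iff : (∃ x, G.Adj u x ∧ parents A u = {x}) ↔ G.Adj u w ∧ w ∈ parents A u := by
    constructor
    · rintro ⟨x, hx, hp⟩
      obtain rfl : x = w := h (hp ▸ rfl)
      exact ⟨hx, hp ▸ rfl⟩
    · rintro ⟨hx, hw⟩
      exact ⟨w, hx, h.antisymm (Set.singleton_subset_iff.2 hw)⟩
  unfold score
  rw [if_neg not_pair]
  exact if_congr singleton_iff rfl rfl

end Score

section Component

variable [Finite V] {G : SimpleGraph V} {n : ℕ} {A : Set (V × V)} {u v w : V}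
  {c : (Mo A).ConnectedComponent}

lemma supp_eq_of_parents_eq_pair (hA : IsDAG A) (hc : c.supp.ncard ≤ 3) (hv : v ∈ c.supp)
    (huw : u ≠ w) (hp : parents A v = {u, w}) : c.supp = {v, u, w} := by
  have hu : (u, v) ∈ A := show u ∈ parents A v by rw [hp]; exact Set.mem_insert u {w}
  have hw : (w, v) ∈ A := show w ∈ parents A v by rw [hp]; exact Set.mem_insert_of_mem u rfl
  have hsub : {v, u, w} ⊆ c.supp := by
    simp only [Set.insert_subset_iff, Set.singleton_subset_iff]
    exact ⟨hv, Mo.mem_supp_of_mem hu hv, Mo.mem_supp_of_mem hw hv⟩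
  have h3 : ({v, u, w} : Set V).ncard = 3 :=
    Set.ncard_eq_three.2 ⟨v, u, w, (hA.ne_of_mem hu).symm, (hA.ne_of_mem hw).symm, huw, rfl⟩
  exact (Set.eq_of_subset_of_ncard_le hsub (h3 ▸ hc) (Set.toFinite _)).symm

lemma parents_subset_of_parents_eq_pair (hA : IsDAG A) (hc : c.supp.ncard ≤ 3)
    (hv : v ∈ c.supp) (huw : u ≠ w) (hp : parents A v = {u, w}) : parents A u ⊆ {w} := by
  intro x hx
  have hu : (u, v) ∈ A := show u ∈ parents A v by rw [hp]; exact Set.mem_insert u {w}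
  have hx' : x ∈ c.supp := Mo.mem_supp_of_mem hx (Mo.mem_supp_of_mem hu hv)
  rw [supp_eq_of_parents_eq_pair hA hc hv huw hp] at hx'
  rcases hx' with rfl | rfl | rfl
  · exact absurd hx (hA.swap_notMem hu)
  · exact absurd rfl (hA.ne_of_mem hx)
  · rfl

lemma score_add_score_le_of_parents_eq_pair (hA : IsDAG A) (hc : c.supp.ncard ≤ 3)
    (hv : v ∈ c.supp) (huw : u ≠ w) (hp : parents A v = {u, w}) :
    score G n A u + score G n A w ≤ if G.Adj u w then 1 else 0 := by
  rw [score_of_parents_subset (parents_subset_of_parents_eq_pair hA hc hv huw hp),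
    score_of_parents_subset (parents_subset_of_parents_eq_pair hA hc hv huw.symm
      (hp.trans (Set.pair_comm u w)))]
  have no_two_cycle : ¬ (w ∈ parents A u ∧ u ∈ parents A w) :=
    fun ⟨h, h'⟩ => hA.swap_notMem h h'
  by_cases hadj : G.Adj u w
  · simp only [hadj, hadj.symm, true_and, if_true]
    split_ifs <;> tauto
  · simp [hadj, G.adj_comm w u]

end Component

lemma SimpleGraph.sum_connectedComponent_sum_supp [Fintype V] {M : Type*} [AddCommMonoid M]
    (H : SimpleGraph V) (f : V → M) :
    ∑ c : H.ConnectedComponent, ∑ v ∈ c.supp.toFinset, f v = ∑ v, f v := by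
  rw [← Finset.sum_fiberwise Finset.univ H.connectedComponentMk f]
  congr! with c
  ext v
  simp [ConnectedComponent.mem_supp_iff]

lemma SimpleGraph.card_eq_sum_card_supp [Fintype V] (H : SimpleGraph V) :
    Fintype.card V = ∑ c : H.ConnectedComponent, c.supp.toFinset.card := by
  rw [← Finset.card_univ]
  simp only [Finset.card_eq_sum_ones]
  exact (H.sum_connectedComponent_sum_supp _).symm

section ComponentScore

variable [Fintype V] {G : SimpleGraph V} {n : ℕ} {A : Set (V × V)} {u v w : V}
  {c : (Mo A).ConnectedComponent}

noncomputable def componentScore (G : SimpleGraph V) (n : ℕ) (A : Set (V × V))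
    (c : (Mo A).ConnectedComponent) : ℕ :=
  ∑ v ∈ c.supp.toFinset, score G n A v

lemma sum_componentScore (G : SimpleGraph V) (n : ℕ) (A : Set (V × V)) :
    ∑ c, componentScore G n A c = ∑ v, score G n A v :=
  (Mo A).sum_connectedComponent_sum_supp _

lemma componentScore_le_of_parents_eq_pair (hA : IsDAG A) (hc : c.supp.ncard ≤ 3)
    (hv : v ∈ c.supp) (huw : u ≠ w) (hvu : G.Adj v u) (hvw : G.Adj v w)
    (hp : parents A v = {u, w}) :
    componentScore G n A c ≤ n + if G.Adj u w then 1 else 0 := by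
  have hsupp : c.supp.toFinset = {v, u, w} := by
    ext x
    simp [supp_eq_of_parents_eq_pair hA hc hv huw hp]
  rw [componentScore, hsupp, Finset.sum_insert (by simp [hvu.ne, hvw.ne]),
    Finset.sum_pair huw, score_of_parents_eq_pair huw hvu hvw hp]
  exact Nat.add_le_add_left (score_add_score_le_of_parents_eq_pair hA hc hv huw hp) n

lemma componentScore_le_card
    (h : ∀ v ∈ c.supp, ¬ ∃ u w, u ≠ w ∧ G.Adj v u ∧ G.Adj v w ∧ parents A v = {u, w}) :
    componentScore G n A c ≤ c.supp.toFinset.card := by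
  simpa [componentScore] using
    Finset.sum_le_card_nsmul _ _ 1 fun v hv => score_le_one (h v (Set.mem_toFinset.1 hv))

lemma three_mul_componentScore_le (hA : IsDAG A) (hc : c.supp.ncard ≤ 3) (hn : 3 ≤ n) :
    3 * componentScore G n A c ≤ (n + 1) * c.supp.toFinset.card := by
  by_cases hbig : ∃ v ∈ c.supp, ∃ u w, u ≠ w ∧ G.Adj v u ∧ G.Adj v w ∧ parents A v = {u, w}
  · obtain ⟨v, hv, u, w, huw, hvu, hvw, hp⟩ := hbig
    have hcard : c.supp.toFinset.card = 3 := by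
      rw [← Set.ncard_eq_toFinset_card', supp_eq_of_parents_eq_pair hA hc hv huw hp]
      exact Set.ncard_eq_three.2 ⟨v, u, w, hvu.ne, hvw.ne, huw, rfl⟩
    have := componentScore_le_of_parents_eq_pair (n := n) hA hc hv huw hvu hvw hp
    rw [hcard]
    split_ifs at this <;> omega
  · have := componentScore_le_card (n := n) fun v hv hb => hbig ⟨v, hv, hb⟩
    nlinarith

lemma ncard_eq_three_and_isClique_of_three_mul_componentScore_eq (hA : IsDAG A)
    (hc : c.supp.ncard ≤ 3) (hn : 3 ≤ n)
    (h : 3 * componentScore G n A c = (n + 1) * c.supp.toFinset.card) :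
    c.supp.ncard = 3 ∧ G.IsClique c.supp := by
  by_cases hbig : ∃ v ∈ c.supp, ∃ u w, u ≠ w ∧ G.Adj v u ∧ G.Adj v w ∧ parents A v = {u, w}
  · obtain ⟨v, hv, u, w, huw, hvu, hvw, hp⟩ := hbig
    have hsupp := supp_eq_of_parents_eq_pair hA hc hv huw hp
    have hcard : c.supp.ncard = 3 := by
      rw [hsupp]
      exact Set.ncard_eq_three.2 ⟨v, u, w, hvu.ne, hvw.ne, huw, rfl⟩
    have huw' : G.Adj u w := by
      have := componentScore_le_of_parents_eq_pair (n := n) hA hc hv huw hvu hvw hp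
      rw [← Set.ncard_eq_toFinset_card', hcard] at h
      split_ifs at this with hadj
      · exact hadj
      · omega
    refine ⟨hcard, ?_⟩
    rw [hsupp]
    simp [isClique_insert, hvu, hvw, huw', hvu.ne, hvw.ne, huw]
  · have := componentScore_le_card (n := n) fun v hv hb => hbig ⟨v, hv, hb⟩
    have hpos : 0 < c.supp.toFinset.card :=
      Finset.card_pos.2 (Set.toFinset_nonempty.2 c.nonempty_supp)
    nlinarith

end ComponentScore

lemma Set.exists_lt_lt_of_ncard_eq_three {α : Type*} [LinearOrder α] {T : Set α}
    (h : T.ncard = 3) : ∃ x y z, x < y ∧ y < z ∧ T = {x, y, z} := by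
  have hT : T.Finite := Set.finite_of_ncard_pos (by omega)
  have hcard : hT.toFinset.card = 3 := by rw [← Set.ncard_eq_toFinset_card T hT, h]
  set f := hT.toFinset.orderEmbOfFin hcard
  refine ⟨f 0, f 1, f 2, f.strictMono (by decide), f.strictMono (by decide), ?_⟩
  have hrange : Set.range f = T := by
    rw [Finset.range_orderEmbOfFin, hT.coe_toFinset]
  rw [← hrange]
  ext x
  simp [Fin.exists_fin_succ, eq_comm]

section Orientation

variable [LinearOrder V] {P : Set (Set V)} {T : Set V} {u v w : V}

def orientDown (P : Set (Set V)) : Set (V × V) := {p | ∃ T ∈ P, p.1 ∈ T ∧ p.2 ∈ T ∧ p.2 < p.1}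

lemma isDAG_orientDown : IsDAG (orientDown P) :=
  isDAG_of_forall_lt fun _ ⟨_, _, _, _, h⟩ => h

lemma parents_orientDown (hP : ∀ v : V, ∃! T, T ∈ P ∧ v ∈ T) (hT : T ∈ P) (hv : v ∈ T) :
    parents (orientDown P) v = {u | u ∈ T ∧ v < u} := by
  ext u
  constructor
  · rintro ⟨T', hT', hu, hv', hlt⟩
    exact ⟨(hP v).unique ⟨hT', hv'⟩ ⟨hT, hv⟩ ▸ hu, hlt⟩
  · rintro ⟨hu, hlt⟩
    exact ⟨T, hT, hu, hv, hlt⟩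

lemma Mo.adj_orientDown_iff (hP : ∀ v : V, ∃! T, T ∈ P ∧ v ∈ T) :
    (Mo (orientDown P)).Adj u w ↔ u ≠ w ∧ ∃ T ∈ P, u ∈ T ∧ w ∈ T := by
  constructor
  · rintro ⟨huw, ⟨T, hT, hu, hw, -⟩ | ⟨T, hT, hw, hu, -⟩ |
      ⟨x, ⟨T, hT, hu, hx, -⟩, ⟨T', hT', hw, hx', -⟩⟩⟩
    · exact ⟨huw, T, hT, hu, hw⟩
    · exact ⟨huw, T, hT, hu, hw⟩
    · exact ⟨huw, T, hT, hu, (hP x).unique ⟨hT', hx'⟩ ⟨hT, hx⟩ ▸ hw⟩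
  · rintro ⟨huw, T, hT, hu, hw⟩
    refine ⟨huw, ?_⟩
    rcases huw.lt_or_gt with hlt | hlt
    · exact Or.inr (Or.inl ⟨T, hT, hw, hu, hlt⟩)
    · exact Or.inl ⟨T, hT, hu, hw, hlt⟩

lemma supp_orientDown (hP : ∀ v : V, ∃! T, T ∈ P ∧ v ∈ T) (hT : T ∈ P) (hv : v ∈ T) :
    ((Mo (orientDown P)).connectedComponentMk v).supp = T := by
  rw [Mo.supp_connectedComponentMk]
  ext w
  constructor
  · intro (hw : (Mo (orientDown P)).Reachable v w)
    rw [reachable_iff_reflTransGen] at hw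
    induction hw with
    | refl => exact hv
    | tail _ hadj ih =>
      obtain ⟨-, T', hT', hx, hy⟩ := (Mo.adj_orientDown_iff hP).1 hadj
      exact (hP _).unique ⟨hT', hx⟩ ⟨hT, ih⟩ ▸ hy
  · intro hw
    by_cases hvw : v = w
    · exact hvw ▸ Reachable.refl v
    · exact Adj.reachable ((Mo.adj_orientDown_iff hP).2 ⟨hvw, T, hT, hv, hw⟩)

lemma sum_score_orientDown (hP : ∀ v : V, ∃! T, T ∈ P ∧ v ∈ T) {G : SimpleGraph V} (n : ℕ)
    [Fintype T] (hT : T ∈ P) (h3 : T.ncard = 3)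
    (hclq : G.IsClique T) : ∑ v ∈ T.toFinset, score G n (orientDown P) v = n + 1 := by
  obtain ⟨x, y, z, hxy, hyz, rfl⟩ := Set.exists_lt_lt_of_ncard_eq_three h3
  have hx : parents (orientDown P) x = {y, z} := by
    ext u
    simp [parents_orientDown hP hT]
    grind
  have hy : parents (orientDown P) y = {z} := by
    ext u
    simp [parents_orientDown hP hT]
    grind
  have hz : parents (orientDown P) z = ∅ := by
    ext u
    simp [parents_orientDown hP hT]
    grind
  have hadj {a b : V} (ha : a ∈ ({x, y, z} : Set V)) (hb : b ∈ ({x, y, z} : Set V))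
      (hab : a < b) : G.Adj a b := hclq ha hb hab.ne
  have sx : score G n (orientDown P) x = n :=
    score_of_parents_eq_pair hyz.ne (hadj (by simp) (by simp) hxy)
      (hadj (by simp) (by simp) (hxy.trans hyz)) hx
  have sy : score G n (orientDown P) y = 1 := by
    rw [score_of_parents_subset hy.le, if_pos ⟨hadj (by simp) (by simp) hyz, hy ▸ rfl⟩]
  have sz : score G n (orientDown P) z = 0 := by
    rw [score_of_parents_subset (hz ▸ Set.empty_subset {z}), hz, if_neg (by simp)]
  simp only [Set.toFinset_insert, Set.toFinset_singleton]
  rw [Finset.sum_insert (by simp [hxy.ne, (hxy.trans hyz).ne]),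
    Finset.sum_pair hyz.ne, sx, sy, sz]

end Orientation

def IsTriangleCover (G : SimpleGraph V) (P : Set (Set V)) : Prop :=
  (∀ T ∈ P, T.ncard = 3 ∧ G.IsClique T) ∧ ∀ v : V, ∃! T, T ∈ P ∧ v ∈ T

section Equivalence

variable [Fintype V] {G : SimpleGraph V}

lemma three_mul_sum_score_orientDown [LinearOrder V] {P : Set (Set V)}
    (hP : IsTriangleCover G P) (n : ℕ) :
    3 * ∑ v, score G n (orientDown P) v = (n + 1) * Fintype.card V := by
  rw [← (Mo (orientDown P)).sum_connectedComponent_sum_supp, Finset.mul_sum,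
    card_eq_sum_card_supp (Mo (orientDown P)), Finset.mul_sum]
  refine Finset.sum_congr rfl fun c _ => c.ind fun v => ?_
  obtain ⟨T, ⟨hT, hv⟩, -⟩ := hP.2 v
  obtain ⟨h3, hclq⟩ := hP.1 T hT
  simp only [supp_orientDown hP.2 hT hv]
  rw [sum_score_orientDown hP.2 n hT h3 hclq,
    ← Set.ncard_eq_toFinset_card', h3, mul_comm]

lemma isTriangleCover_of_le_three_mul_sum_score {n : ℕ} {A : Set (V × V)} (hA : IsDAG A)
    (hc : ∀ c : (Mo A).ConnectedComponent, c.supp.ncard ≤ 3) (hn : 3 ≤ n)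
    (h : (n + 1) * Fintype.card V ≤ 3 * ∑ v, score G n A v) :
    IsTriangleCover G (Set.range (ConnectedComponent.supp (G := Mo A))) := by
  have hle (c : (Mo A).ConnectedComponent) := three_mul_componentScore_le (G := G) hA (hc c) hn
  have heq : ∀ c, 3 * componentScore G n A c = (n + 1) * c.supp.toFinset.card := by
    refine fun c => (Finset.sum_eq_sum_iff_of_le fun c _ => hle c).1 ?_ c (Finset.mem_univ c)
    refine le_antisymm (Finset.sum_le_sum fun c _ => hle c) ?_
    rwa [← Finset.mul_sum, ← card_eq_sum_card_supp, ← Finset.mul_sum, sum_componentScore]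
  refine ⟨?_, fun v => ⟨_, ⟨⟨_, rfl⟩, rfl⟩, ?_⟩⟩
  · rintro _ ⟨c, rfl⟩
    exact ncard_eq_three_and_isClique_of_three_mul_componentScore_eq hA (hc c) hn (heq c)
  · rintro _ ⟨⟨c, rfl⟩, hv⟩
    exact congrArg ConnectedComponent.supp ((c.mem_supp_iff v).1 hv).symm

end Equivalence

/-- `G` (with `3 ∣ n`) admits a triangle cover iff there is a DAG, all of whose
moralized-graph connected components have at most 3 vertices, achieving score at
least `(n² + n)/3` for the local scores `f_v({w}) = 1` if `w ∈ N_G(v)`,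
`f_v({u,w}) = n` if `{u,w} ⊆ N_G(v)`, all other scores `0`. -/
theorem stmt_10 [Fintype V] (G : SimpleGraph V) (hn : 3 ∣ Fintype.card V) :
    (∃ P : Set (Set V), (∀ T ∈ P, T.ncard = 3 ∧ G.IsClique T) ∧
        ∀ v : V, ∃! T, T ∈ P ∧ v ∈ T) ↔
    ∃ A : Set (V × V), IsDAG A ∧
      (∀ v : V, {w | (Mo A).Reachable v w}.ncard ≤ 3) ∧
      (∑ v : V,
        (if ∃ u w, u ≠ w ∧ G.Adj v u ∧ G.Adj v w ∧ parents A v = {u, w} then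
          Fintype.card V
         else if ∃ w, G.Adj v w ∧ parents A v = {w} then 1 else 0)) ≥
        (Fintype.card V ^ 2 + Fintype.card V) / 3 := by
  set n := Fintype.card V
  constructor
  · rintro ⟨P, hP⟩
    let _ : LinearOrder V := LinearOrder.lift' _ (Fintype.equivFin V).injective
    refine ⟨orientDown P, isDAG_orientDown, fun v => ?_, Nat.div_le_of_le_mul ?_⟩
    · obtain ⟨T, ⟨hT, hv⟩, -⟩ := hP.2 v
      rw [← Mo.supp_connectedComponentMk, supp_orientDown hP.2 hT hv]
      exact (hP.1 T hT).1.le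
    · have h := three_mul_sum_score_orientDown hP n
      -- `score` decides its conditions classically, the statement through `Fintype V`;
      -- `convert` identifies the two `Decidable` instances.
      unfold score at h
      rw [show n ^ 2 + n = (n + 1) * n by ring]
      convert Nat.le_of_eq h.symm
  · rintro ⟨A, hA, hc, hge⟩
    replace hge : (n ^ 2 + n) / 3 ≤ ∑ v, score G n A v := by unfold score; convert hge
    obtain hV | hV := isEmpty_or_nonempty V
    · exact ⟨∅, by simp, isEmptyElim⟩
    refine ⟨_, isTriangleCover_of_le_three_mul_sum_score hA
      (fun c => c.ind fun v => Mo.supp_connectedComponentMk A v ▸ hc v)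
      (Nat.le_of_dvd Fintype.card_pos hn) ?_⟩
    calc (n + 1) * n = 3 * ((n ^ 2 + n) / 3) := by
          rw [Nat.mul_div_cancel' (dvd_add (dvd_pow hn two_ne_zero) hn)]; ring
      _ ≤ 3 * ∑ v, score G n A v := Nat.mul_le_mul_left 3 hge
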